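/- arXiv:math/0511550 — 8 statements merged into one kernel-verified Lean document; each statement's English description precedes it below -/
import Mathlib

section
/- Let g be a Lie algebra with zero center. If D is a derivation of Der(g) that vanishes on all inner derivations ad_x for x ∈ g, then D = 0. -/
/-- Let `g` be a Lie algebra with zero center. If `D` is a derivation of `Der(g)`
that vanishes on all inner derivations `ad_x`, then `D = 0`. -/
theorem derivation_of_derivation_eq_zero_of_vanishes_on_inner (K : Type*) (L : Type*)
    [Field K] [LieRing L] [LieAlgebra K L] (h : LieAlgebra.center K L = ⊥)
    (D : LieDerivation K (LieDerivation K L L) (LieDerivation K L L))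
    (hD : ∀ x : L, D (LieDerivation.ad K L x) = 0) :
    D = 0 := by
  ext E x
  have key : LieDerivation.ad K L ((D E) x) = 0 := by
    rw [← LieDerivation.lie_der_ad_eq_ad_der]
    have := D.apply_lie_eq_add E (LieDerivation.ad K L x)
    rw [LieDerivation.lie_der_ad_eq_ad_der, hD, hD, lie_zero] at this
    simpa using this.symm
  have := LieDerivation.injective_ad_of_center_eq_bot h (by simpa using key :
    LieDerivation.ad K L ((D E) x) = LieDerivation.ad K L 0)
  simpa using this
end

section
/- If g is a perfect Lie algebra with zero center, then every derivation D of Der(g) maps the ideal ad(g) of inner derivations into itself; i.e., for each x ∈ g there exists y ∈ g with D(ad_x) = ad_y. -/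
/-!
Since `⁅E, ad z⁆ = ad (E z)` for every derivation `E`, the Leibniz rule for `D` turns
`D (ad ⁅a, b⁆) = ⁅D (ad a), ad b⁆ + ⁅ad a, D (ad b)⁆` into an inner derivation. A perfect Lie
algebra is spanned by brackets, and `x ↦ D (ad x)` is linear, so `D (ad x)` is inner for all `x`.
-/

namespace LieDerivation

variable {R L : Type*} [CommRing R] [LieRing L] [LieAlgebra R L]

lemma apply_ad_lie (D : LieDerivation R (LieDerivation R L L) (LieDerivation R L L)) (a b : L) :
    D (ad R L ⁅a, b⁆) = ad R L (D (ad R L a) b - D (ad R L b) a) := by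
  rw [LieHom.map_lie, apply_lie_eq_add, lie_der_ad_eq_ad_der, ← lie_skew,
    lie_der_ad_eq_ad_der, map_sub]
  abel

lemma apply_ad_mem_range_ad (hperf : ⁅(⊤ : LieIdeal R L), (⊤ : LieIdeal R L)⁆ = ⊤)
    (D : LieDerivation R (LieDerivation R L L) (LieDerivation R L L)) (x : L) :
    D (ad R L x) ∈ (ad R L).range := by
  have hx : x ∈ Submodule.span R
      {m | ∃ a ∈ (⊤ : LieIdeal R L), ∃ b ∈ (⊤ : LieIdeal R L), ⁅a, b⁆ = m} := by
    rw [← LieSubmodule.lieIdeal_oper_eq_linear_span', hperf]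
    exact LieSubmodule.mem_top x
  refine (Submodule.span_le (p := (ad R L).range.toSubmodule.comap
    ((D : _ →ₗ[R] _) ∘ₗ (ad R L).toLinearMap))).mpr ?_ hx
  rintro _ ⟨a, -, b, -, rfl⟩
  exact ⟨_, (apply_ad_lie D a b).symm⟩

end LieDerivation

theorem derivation_maps_inner_to_inner_general (K : Type*) (L : Type*) [Field K] [LieRing L]
    [LieAlgebra K L] (hperf : ⁅(⊤ : LieIdeal K L), (⊤ : LieIdeal K L)⁆ = ⊤)
    (D : LieDerivation K (LieDerivation K L L) (LieDerivation K L L)) (x : L) :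
    ∃ y : L, D (LieDerivation.ad K L x) = LieDerivation.ad K L y := by
  obtain ⟨y, hy⟩ := LieDerivation.apply_ad_mem_range_ad hperf D x
  exact ⟨y, hy.symm⟩

/-- If `g` is perfect with zero center, then every derivation of `Der(g)` maps
inner derivations to inner derivations. -/
theorem derivation_maps_inner_to_inner (K : Type*) (L : Type*) [Field K] [LieRing L]
    [LieAlgebra K L] (hperf : ⁅(⊤ : LieIdeal K L), (⊤ : LieIdeal K L)⁆ = ⊤)
    (hc : LieAlgebra.center K L = ⊥)
    (D : LieDerivation K (LieDerivation K L L) (LieDerivation K L L)) (x : L) :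
    ∃ y : L, D (LieDerivation.ad K L x) = LieDerivation.ad K L y :=
  derivation_maps_inner_to_inner_general K L hperf D x
end

section
/- Let g be a perfect Lie algebra with zero center, and let D be a derivation of Der(g). Then the map d : g → g defined uniquely by D(ad_x) = ad_{d(x)} is itself a derivation of g. -/
namespace LieDerivation

variable {R L M : Type*} [CommRing R] [LieRing L] [LieAlgebra R L] [LieRing M] [LieAlgebra R M]

def ofInjectiveIntertwining (f : L →ₗ⁅R⁆ M) (hf : Function.Injective f)
    (D : LieDerivation R M M) (d : L → L) (hd : ∀ x, D (f x) = f (d x)) :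
    LieDerivation R L L where
  toFun := d
  map_add' x y := hf <| by rw [← hd, map_add, map_add, hd, hd, map_add]
  map_smul' c x := hf <| by rw [← hd, map_smul, map_smul, hd, RingHom.id_apply, map_smul]
  leibniz' a b := hf <| by
    change f (d ⁅a, b⁆) = f (⁅a, d b⁆ - ⁅b, d a⁆)
    rw [← hd, LieHom.map_lie, apply_lie_eq_sub, hd, hd, map_sub, LieHom.map_lie, LieHom.map_lie]

end LieDerivation

theorem induced_map_is_derivation_general (K : Type*) (L : Type*) [Field K] [LieRing L]
    [LieAlgebra K L]
    (hc : LieAlgebra.center K L = ⊥)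
    (D : LieDerivation K (LieDerivation K L L) (LieDerivation K L L))
    (d : L → L) (hd : ∀ x : L, D (LieDerivation.ad K L x) = LieDerivation.ad K L (d x)) :
    ∃ e : LieDerivation K L L, ⇑e = d :=
  ⟨.ofInjectiveIntertwining _ (LieDerivation.injective_ad_of_center_eq_bot hc) D d hd, rfl⟩

/-- Let `g` be perfect with zero center and `D` a derivation of `Der(g)`. The map
`d : g → g` determined by `D (ad x) = ad (d x)` is itself a derivation of `g`. -/
theorem induced_map_is_derivation (K : Type*) (L : Type*) [Field K] [LieRing L]
    [LieAlgebra K L] (hperf : ⁅(⊤ : LieIdeal K L), (⊤ : LieIdeal K L)⁆ = ⊤)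
    (hc : LieAlgebra.center K L = ⊥)
    (D : LieDerivation K (LieDerivation K L L) (LieDerivation K L L))
    (d : L → L) (hd : ∀ x : L, D (LieDerivation.ad K L x) = LieDerivation.ad K L (d x)) :
    ∃ e : LieDerivation K L L, ⇑e = d :=
  induced_map_is_derivation_general K L hc D d hd
end

section
/- Let g be a perfect Lie algebra with zero center. If the center of the outer derivation algebra Der(g)/ad(g) is zero, then the holomorph h(g) = g ⋊ Der(g) is complete. -/
section HolomorphDef

variable (K : Type*) (L : Type*) [Field K] [LieRing L] [LieAlgebra K L]

/-- The bracket `[(x,d),(y,e)] = ([x,y] + d(y) - e(x), [d,e])` on `g ⊕ Der(g)`. -/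
def holoBracket (h h' : L × LieDerivation K L L) : L × LieDerivation K L L :=
  (⁅h.1, h'.1⁆ + h.2 h'.1 - h'.2 h.1, ⁅h.2, h'.2⁆)

variable {K L}

lemma holoBracket_add_left (x y z : L × LieDerivation K L L) :
    holoBracket K L (x + y) z = holoBracket K L x z + holoBracket K L y z := by
  simp only [holoBracket, Prod.ext_iff, Prod.fst_add, Prod.snd_add, add_lie,
    LieDerivation.coe_add, Pi.add_apply, map_add]
  constructor
  · abel
  · simp [add_lie]

lemma holoBracket_add_right (x y z : L × LieDerivation K L L) :
    holoBracket K L x (y + z) = holoBracket K L x y + holoBracket K L x z := by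
  simp only [holoBracket, Prod.ext_iff, Prod.fst_add, Prod.snd_add, lie_add,
    LieDerivation.coe_add, Pi.add_apply, map_add]
  constructor
  · abel
  · simp [lie_add]

lemma holoBracket_self (x : L × LieDerivation K L L) : holoBracket K L x x = 0 := by
  simp [holoBracket, Prod.ext_iff]

lemma holoBracket_leibniz (x y z : L × LieDerivation K L L) :
    holoBracket K L x (holoBracket K L y z) =
      holoBracket K L (holoBracket K L x y) z + holoBracket K L y (holoBracket K L x z) := by
  simp only [holoBracket, Prod.ext_iff, Prod.fst_add, Prod.snd_add,
    LieDerivation.commutator_apply, map_add, map_sub, lie_add, lie_sub, add_lie, sub_lie,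
    LieDerivation.apply_lie_eq_add]
  constructor
  · rw [leibniz_lie x.1 y.1 z.1, ← lie_skew (z.2 x.1) y.1]
    abel
  · rw [leibniz_lie]

lemma holoBracket_smul (t : K) (x y : L × LieDerivation K L L) :
    holoBracket K L x (t • y) = t • holoBracket K L x y := by
  refine Prod.ext ?_ ?_
  · simp [holoBracket, smul_add, smul_sub]
  · exact lie_smul t x.2 y.2

variable (K L)

/-- The holomorph `h(g) = g ⋊ Der(g)` of a Lie algebra `g`: as a vector space it is
the direct sum `g ⊕ Der(g)`. -/
def Holomorph := L × LieDerivation K L L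

namespace Holomorph

instance : AddCommGroup (Holomorph K L) :=
  inferInstanceAs (AddCommGroup (L × LieDerivation K L L))

instance : Module K (Holomorph K L) :=
  inferInstanceAs (Module K (L × LieDerivation K L L))

instance : LieRing (Holomorph K L) where
  bracket h h' := holoBracket K L h h'
  add_lie := holoBracket_add_left
  lie_add := holoBracket_add_right
  lie_self := holoBracket_self
  leibniz_lie := holoBracket_leibniz

instance : LieAlgebra K (Holomorph K L) where
  lie_smul := holoBracket_smul

variable {K L}

/-- The element `(x, d)` (also written `x + d`) of the holomorph. -/
def mk (x : L) (d : LieDerivation K L L) : Holomorph K L := (x, d)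

/-- The `g`-component of an element of the holomorph. -/
def fst (h : Holomorph K L) : L := (show L × LieDerivation K L L from h).1

/-- The `Der(g)`-component of an element of the holomorph. -/
def snd (h : Holomorph K L) : LieDerivation K L L := (show L × LieDerivation K L L from h).2

@[simp] lemma fst_mk (x : L) (d : LieDerivation K L L) : (mk x d).fst = x := rfl
@[simp] lemma snd_mk (x : L) (d : LieDerivation K L L) : (mk x d).snd = d := rfl

lemma ext {h h' : Holomorph K L} (h1 : h.fst = h'.fst) (h2 : h.snd = h'.snd) : h = h' :=
  Prod.ext h1 h2

/-- The bracket of the holomorph is `[(x,d),(y,e)] = ([x,y] + d(y) - e(x), [d,e])`. -/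
lemma bracket_def (x y : L) (d e : LieDerivation K L L) :
    ⁅mk x d, mk y e⁆ = mk (⁅x, y⁆ + d y - e x) ⁅d, e⁆ := rfl

end Holomorph

end HolomorphDef

/-- A Lie algebra is complete if its center is zero and every derivation is inner. -/
def IsCompleteLieAlgebra (K : Type*) (M : Type*) [Field K] [LieRing M] [LieAlgebra K M] : Prop :=
  LieAlgebra.center K M = ⊥ ∧
    ∀ D : LieDerivation K M M, ∃ m : M, D = LieDerivation.ad K M m

/-!
A derivation `D` of `h(g) = g ⋊ Der(g)` maps `g` into `g`: every bracket with an element of `g`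
has zero `Der(g)`-component, and `g` is spanned by brackets. So `D` restricts to a derivation `F`
of `g`. The `g`-component `A` of `D` on `Der(g)` is a cocycle, `A ⁅d, e⁆ = d (A e) - e (A d)`, so
`T y := A (ad y)` is a derivation of `g` with `⁅T, d⁆ = ad (A d)`. Its class is central in
`Der(g)/ad(g)`, hence `T = ad x'`, and injectivity of `ad` gives `A d = d x` with `x = -x'`.
Comparing on `g` and on `Der(g)` then shows `D = ad (-x, F + ad x)`.
-/

theorem LieIdeal.mem_of_forall_lie_mem_of_center_quotient_eq_bot {R M : Type*} [CommRing R]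
    [LieRing M] [LieAlgebra R M] {I : LieIdeal R M}
    (hI : LieAlgebra.center R (M ⧸ I) = ⊥) {x : M} (hx : ∀ m, ⁅x, m⁆ ∈ I) : x ∈ I := by
  have hcenter : LieSubmodule.Quotient.mk' I x ∈ LieAlgebra.center R (M ⧸ I) := by
    refine (LieModule.mem_maxTrivSubmodule R _ _ _).mpr fun m => ?_
    obtain ⟨m, rfl⟩ := LieSubmodule.Quotient.surjective_mk' I m
    change LieSubmodule.Quotient.mk ⁅m, x⁆ = 0
    rw [LieSubmodule.Quotient.mk_eq_zero', ← lie_skew]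
    exact neg_mem (hx m)
  rwa [hI, LieSubmodule.mem_bot, LieSubmodule.Quotient.mk_eq_zero] at hcenter

namespace LieDerivation

variable {R L : Type*} [CommRing R] [LieRing L] [LieAlgebra R L]

def ofCocycle (A : LieDerivation R L L →ₗ[R] L)
    (hA : ∀ d e, A ⁅d, e⁆ = d (A e) - e (A d)) : LieDerivation R L L where
  toLinearMap := A ∘ₗ (ad R L : L →ₗ[R] LieDerivation R L L)
  leibniz' a b := by simp [hA]

lemma ofCocycle_apply (A : LieDerivation R L L →ₗ[R] L)
    (hA : ∀ d e, A ⁅d, e⁆ = d (A e) - e (A d)) (x : L) : ofCocycle A hA x = A (ad R L x) := rfl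

lemma ofCocycle_lie (A : LieDerivation R L L →ₗ[R] L)
    (hA : ∀ d e, A ⁅d, e⁆ = d (A e) - e (A d)) (d : LieDerivation R L L) :
    ⁅ofCocycle A hA, d⁆ = ad R L (A d) := by
  ext y
  simp [ofCocycle_apply, ← lie_der_ad_eq_ad_der, hA]

theorem exists_forall_eq_apply_of_cocycle (hc : LieAlgebra.center R L = ⊥)
    (houter : LieAlgebra.center R (LieDerivation R L L ⧸ (ad R L).idealRange) = ⊥)
    (A : LieDerivation R L L →ₗ[R] L) (hA : ∀ d e, A ⁅d, e⁆ = d (A e) - e (A d)) :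
    ∃ x, ∀ d, A d = d x := by
  have hinner : ofCocycle A hA ∈ (ad R L).idealRange :=
    LieIdeal.mem_of_forall_lie_mem_of_center_quotient_eq_bot houter fun d =>
      ofCocycle_lie A hA d ▸ mem_ad_idealRange_iff.mpr ⟨_, rfl⟩
  obtain ⟨x, hx⟩ := mem_ad_idealRange_iff.mp hinner
  refine ⟨-x, fun d => injective_ad_of_center_eq_bot hc ?_⟩
  rw [← ofCocycle_lie A hA, ← hx, ← lie_skew, lie_der_ad_eq_ad_der, LieDerivation.map_neg, map_neg]

end LieDerivation

namespace Holomorph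

variable {K L : Type*} [Field K] [LieRing L] [LieAlgebra K L]

@[simp] lemma fst_add (h h' : Holomorph K L) : (h + h').fst = h.fst + h'.fst := rfl
@[simp] lemma snd_add (h h' : Holomorph K L) : (h + h').snd = h.snd + h'.snd := rfl
@[simp] lemma snd_sub (h h' : Holomorph K L) : (h - h').snd = h.snd - h'.snd := rfl
@[simp] lemma fst_smul (t : K) (h : Holomorph K L) : (t • h).fst = t • h.fst := rfl
@[simp] lemma snd_smul (t : K) (h : Holomorph K L) : (t • h).snd = t • h.snd := rfl

@[simp] lemma fst_zero : (0 : Holomorph K L).fst = 0 := rfl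

@[simp] lemma fst_lie (h h' : Holomorph K L) :
    ⁅h, h'⁆.fst = ⁅h.fst, h'.fst⁆ + h.snd h'.fst - h'.snd h.fst := rfl

@[simp] lemma snd_lie (h h' : Holomorph K L) : ⁅h, h'⁆.snd = ⁅h.snd, h'.snd⁆ := rfl

variable (K L) in
def fstₗ : Holomorph K L →ₗ[K] L where
  toFun := fst
  map_add' := fst_add
  map_smul' := fst_smul

variable (K L) in
def sndₗ : Holomorph K L →ₗ[K] LieDerivation K L L where
  toFun := snd
  map_add' := snd_add
  map_smul' := snd_smul

@[simp] lemma sndₗ_apply (h : Holomorph K L) : sndₗ K L h = h.snd := rfl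

variable (K L) in
def inl : L →ₗ⁅K⁆ Holomorph K L where
  toFun x := mk x 0
  map_add' x y := ext (by simp) (by simp)
  map_smul' t x := ext (by simp) (by simp)
  map_lie' := ext (by simp) (by simp)

variable (K L) in
def inr : LieDerivation K L L →ₗ⁅K⁆ Holomorph K L where
  toFun d := mk 0 d
  map_add' d e := ext (by simp) (by simp)
  map_smul' t d := ext (by simp) (by simp)
  map_lie' := ext (by simp) (by simp)

@[simp] lemma fst_inl (x : L) : (inl K L x).fst = x := rfl
@[simp] lemma snd_inl (x : L) : (inl K L x).snd = 0 := rfl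
@[simp] lemma fst_inr (d : LieDerivation K L L) : (inr K L d).fst = 0 := rfl
@[simp] lemma snd_inr (d : LieDerivation K L L) : (inr K L d).snd = d := rfl

lemma inr_lie_inl (d : LieDerivation K L L) (y : L) : ⁅inr K L d, inl K L y⁆ = inl K L (d y) :=
  ext (by simp) (by simp)

lemma inl_add_inr (h : Holomorph K L) : inl K L h.fst + inr K L h.snd = h :=
  ext (by simp) (by simp)

theorem center_eq_bot (hc : LieAlgebra.center K L = ⊥) :
    LieAlgebra.center K (Holomorph K L) = ⊥ := by
  refine (LieSubmodule.eq_bot_iff _).mpr fun z hz => ?_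
  rw [LieModule.mem_maxTrivSubmodule] at hz
  have hfst : z.fst = 0 := by
    have : z.fst ∈ LieAlgebra.center K L := (LieModule.mem_maxTrivSubmodule K L L _).mpr
      fun y => by simpa using congrArg fst (hz (inr K L (LieDerivation.ad K L y)))
    rwa [hc, LieSubmodule.mem_bot] at this
  have hsnd : z.snd = 0 := LieDerivation.ext fun y => by
    simpa [hfst] using congrArg fst (hz (inl K L y))
  exact ext hfst hsnd

lemma derivation_ext {D₁ D₂ : LieDerivation K (Holomorph K L) (Holomorph K L)}
    (hl : ∀ x, D₁ (inl K L x) = D₂ (inl K L x)) (hr : ∀ d, D₁ (inr K L d) = D₂ (inr K L d)) :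
    D₁ = D₂ :=
  LieDerivation.ext fun h => by rw [← inl_add_inr h, map_add, map_add, hl, hr]

variable (D : LieDerivation K (Holomorph K L) (Holomorph K L))

lemma snd_apply_inl_eq_zero (hperf : ⁅(⊤ : LieIdeal K L), (⊤ : LieIdeal K L)⁆ = ⊤) (x : L) :
    (D (inl K L x)).snd = 0 := by
  have hx : x ∈ (⁅(⊤ : LieIdeal K L), ⊤⁆ : LieIdeal K L).toSubmodule := by simp [hperf]
  rw [LieSubmodule.lieIdeal_oper_eq_linear_span] at hx
  refine Submodule.span_le (p := LinearMap.ker (sndₗ K L ∘ₗ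
    (D : Holomorph K L →ₗ[K] Holomorph K L) ∘ₗ (inl K L : L →ₗ[K] Holomorph K L))).mpr ?_ hx
  rintro _ ⟨⟨a, -⟩, ⟨b, -⟩, rfl⟩
  simp

lemma exists_apply_inl_eq_inl (hperf : ⁅(⊤ : LieIdeal K L), (⊤ : LieIdeal K L)⁆ = ⊤) :
    ∃ F : LieDerivation K L L, ∀ x, D (inl K L x) = inl K L (F x) := by
  have hD (x : L) : D (inl K L x) = inl K L (D (inl K L x)).fst :=
    ext rfl (snd_apply_inl_eq_zero D hperf x)
  refine ⟨⟨fstₗ K L ∘ₗ (D : Holomorph K L →ₗ[K] Holomorph K L) ∘ₗ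
    (inl K L : L →ₗ[K] Holomorph K L), fun a b => ?_⟩, hD⟩
  change (D (inl K L ⁅a, b⁆)).fst = ⁅a, (D (inl K L b)).fst⁆ - ⁅b, (D (inl K L a)).fst⁆
  rw [LieHom.map_lie, LieDerivation.apply_lie_eq_add, hD a, hD b]
  simp [sub_eq_add_neg]

lemma fst_apply_inr_lie (d e : LieDerivation K L L) :
    (D (inr K L ⁅d, e⁆)).fst = d (D (inr K L e)).fst - e (D (inr K L d)).fst := by
  rw [LieHom.map_lie, LieDerivation.apply_lie_eq_add]
  simp only [fst_add, fst_lie, fst_inr, snd_inr, zero_lie, lie_zero, map_zero, zero_add,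
    add_zero, sub_zero, zero_sub]
  abel

lemma apply_inr_eq {F : LieDerivation K L L} (hF : ∀ x, D (inl K L x) = inl K L (F x))
    (d : LieDerivation K L L) :
    D (inr K L d) = mk (D (inr K L d)).fst (⁅F, d⁆ - LieDerivation.ad K L (D (inr K L d)).fst) := by
  refine ext rfl (LieDerivation.ext fun y => ?_)
  have h := congrArg fst (D.apply_lie_eq_add (inr K L d) (inl K L y))
  rw [inr_lie_inl, hF, hF] at h
  simp only [fst_add, fst_lie, fst_inl, snd_inl, fst_inr, snd_inr, zero_lie, zero_add,
    LieDerivation.coe_zero, Pi.zero_apply, sub_zero] at h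
  simp [h]

theorem exists_eq_ad (hperf : ⁅(⊤ : LieIdeal K L), (⊤ : LieIdeal K L)⁆ = ⊤)
    (hc : LieAlgebra.center K L = ⊥)
    (houter : LieAlgebra.center K
      (LieDerivation K L L ⧸ (LieDerivation.ad K L).idealRange) = ⊥) :
    ∃ z, D = LieDerivation.ad K (Holomorph K L) z := by
  obtain ⟨F, hF⟩ := exists_apply_inl_eq_inl D hperf
  obtain ⟨x, hx⟩ := LieDerivation.exists_forall_eq_apply_of_cocycle hc houter
    (fstₗ K L ∘ₗ (D : Holomorph K L →ₗ[K] Holomorph K L) ∘ₗ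
      (inr K L : LieDerivation K L L →ₗ[K] Holomorph K L)) (fst_apply_inr_lie D)
  refine ⟨mk (-x) (F + LieDerivation.ad K L x), derivation_ext (fun y => ?_) (fun d => ?_)⟩ <;>
    rw [LieDerivation.ad_apply_apply]
  · rw [hF]
    refine ext ?_ (by simp)
    simp only [fst_inl, fst_lie, fst_mk, neg_lie, lie_skew, snd_mk, LieDerivation.coe_add,
      Pi.add_apply, LieDerivation.ad_apply_apply, snd_inl, LieDerivation.coe_zero, Pi.zero_apply,
      sub_zero]
    rw [← lie_skew x y]
    abel
  · rw [apply_inr_eq D hF, show (D (inr K L d)).fst = d x from hx d]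
    refine ext (by simp) ?_
    rw [snd_mk, snd_lie, snd_mk, snd_inr, add_lie, ← lie_skew (LieDerivation.ad K L x) d,
      LieDerivation.lie_der_ad_eq_ad_der, sub_eq_add_neg]

end Holomorph

/-- Let `g` be perfect with zero center. If the outer derivation algebra
`Der(g)/ad(g)` has zero center, then the holomorph `h(g)` is complete. -/
theorem holomorph_isComplete_of_center_outer_eq_bot (K : Type*) (L : Type*) [Field K]
    [LieRing L] [LieAlgebra K L] (hperf : ⁅(⊤ : LieIdeal K L), (⊤ : LieIdeal K L)⁆ = ⊤)
    (hc : LieAlgebra.center K L = ⊥)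
    (houter : LieAlgebra.center K
      (LieDerivation K L L ⧸ (LieDerivation.ad K L).idealRange) = ⊥) :
    IsCompleteLieAlgebra K (Holomorph K L) :=
  ⟨Holomorph.center_eq_bot hc, fun D => Holomorph.exists_eq_ad D hperf hc houter⟩
end

section
/- Let g be a perfect Lie algebra with zero center. If the holomorph h(g) = g ⋊ Der(g) is complete, then the center of the outer derivation algebra Der(g)/ad(g) is zero. -/
namespace LieDerivation

variable {R L : Type*} [CommRing R] [LieRing L] [LieAlgebra R L]

lemma exists_ad_eq_lie_of_mk_mem_center {D : LieDerivation R L L}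
    (hD : LieSubmodule.Quotient.mk' (ad R L).idealRange D ∈
      LieAlgebra.center R (LieDerivation R L L ⧸ (ad R L).idealRange))
    (E : LieDerivation R L L) : ∃ x, ad R L x = ⁅D, E⁆ := by
  have hED : LieSubmodule.Quotient.mk' (ad R L).idealRange ⁅E, D⁆ = 0 :=
    (LieModule.mem_maxTrivSubmodule R _ _ _).mp hD (LieSubmodule.Quotient.mk' _ E)
  obtain ⟨x, hx⟩ := mem_ad_idealRange_iff.mp ((LieSubmodule.Quotient.mk_eq_zero _).mp hED)
  exact ⟨-x, by rw [map_neg, hx, lie_skew]⟩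

lemma eq_zero_of_forall_lie_eq_zero (hc : LieAlgebra.center R L = ⊥) {F : LieDerivation R L L}
    (hF : ∀ E : LieDerivation R L L, ⁅F, E⁆ = 0) : F = 0 := by
  have hF' : F ∈ LieModule.maxTrivSubmodule R L (LieDerivation R L L) := fun x ↦ by
    rw [← lie_ad, ← lie_skew, hF, neg_zero]
  rwa [maxTrivSubmodule_eq_bot_of_center_eq_bot hc, LieSubmodule.mem_bot] at hF'

section AdPreimage

variable (hc : LieAlgebra.center R L = ⊥) (D : LieDerivation R L L)
  (hD : ∀ E : LieDerivation R L L, ∃ x, ad R L x = ⁅D, E⁆)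

noncomputable def adPreimageLie : LieDerivation R L L →ₗ[R] L :=
  (LinearEquiv.ofInjective (ad R L).toLinearMap (injective_ad_of_center_eq_bot hc)).symm ∘ₗ
    (LieAlgebra.ad R (LieDerivation R L L) D).codRestrict (LinearMap.range (ad R L).toLinearMap)
      fun E ↦ (hD E).imp fun _ h ↦ h

lemma ad_adPreimageLie (E : LieDerivation R L L) : ad R L (adPreimageLie hc D hD E) = ⁅D, E⁆ :=
  LinearEquiv.ofInjective_symm_apply (h := injective_ad_of_center_eq_bot hc) _ _

lemma lie_adPreimageLie (E : LieDerivation R L L) (y : L) :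
    ⁅y, adPreimageLie hc D hD E⁆ = E (D y) - D (E y) := by
  have h := DFunLike.congr_fun (ad_adPreimageLie hc D hD E) y
  rw [ad_apply_apply, commutator_apply] at h
  rw [← lie_skew, h, neg_sub]

lemma adPreimageLie_lie (E F : LieDerivation R L L) :
    adPreimageLie hc D hD ⁅E, F⁆ = E (adPreimageLie hc D hD F) - F (adPreimageLie hc D hD E) := by
  apply injective_ad_of_center_eq_bot hc
  rw [map_sub, ← lie_der_ad_eq_ad_der, ← lie_der_ad_eq_ad_der, ad_adPreimageLie,
    ad_adPreimageLie, ad_adPreimageLie, leibniz_lie, ← lie_skew ⁅D, E⁆ F]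
  abel

end AdPreimage

end LieDerivation

namespace Holomorph

variable {K L : Type*} [Field K] [LieRing L] [LieAlgebra K L]

def extendDerivation (D : LieDerivation K L L) (φ : LieDerivation K L L →ₗ[K] L)
    (hφD : ∀ (E : LieDerivation K L L) (y : L), ⁅y, φ E⁆ = E (D y) - D (E y))
    (hφ : ∀ E F : LieDerivation K L L, φ ⁅E, F⁆ = E (φ F) - F (φ E)) :
    LieDerivation K (Holomorph K L) (Holomorph K L) where
  toLinearMap := LinearMap.inl K L _ ∘ₗ (D : L →ₗ[K] L).coprod φ
  leibniz' := by
    rintro ⟨x, E⟩ ⟨y, F⟩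
    refine Prod.ext ?_ ?_
    · show D (⁅x, y⁆ + E y - F x) + φ ⁅E, F⁆ =
        (⁅x, D y + φ F⁆ + E (D y + φ F) - 0) - (⁅y, D x + φ E⁆ + F (D x + φ E) - 0)
      simp only [map_sub, map_add, LieDerivation.apply_lie_eq_add, hφ, lie_add, hφD, sub_zero]
      rw [← lie_skew (D x) y]
      abel
    · show (0 : LieDerivation K L L) = ⁅E, 0⁆ - ⁅F, 0⁆
      rw [lie_zero, lie_zero, sub_zero]

lemma eq_ad_fst_of_extendDerivation_eq_ad (hc : LieAlgebra.center K L = ⊥)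
    {D : LieDerivation K L L} {φ : LieDerivation K L L →ₗ[K] L} {hφD hφ} {m : Holomorph K L}
    (hm : extendDerivation D φ hφD hφ = LieDerivation.ad K (Holomorph K L) m) :
    D = LieDerivation.ad K L m.fst := by
  have hmk (x : L) (E : LieDerivation K L L) :
      mk (D x + φ E) 0 = mk (⁅m.fst, x⁆ + m.snd x - E m.fst) ⁅m.snd, E⁆ := by
    have h := DFunLike.congr_fun hm (mk x E)
    rwa [LieDerivation.ad_apply_apply] at h
  have hsnd : m.snd = 0 :=
    LieDerivation.eq_zero_of_forall_lie_eq_zero hc fun E ↦ (congrArg snd (hmk 0 E)).symm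
  ext x
  simpa [hsnd] using congrArg fst (hmk x 0)

end Holomorph

theorem center_outer_eq_bot_of_holomorph_isComplete_general (K : Type*) (L : Type*) [Field K]
    [LieRing L] [LieAlgebra K L]
    (hc : LieAlgebra.center K L = ⊥)
    (hcomp : IsCompleteLieAlgebra K (Holomorph K L)) :
    LieAlgebra.center K (LieDerivation K L L ⧸ (LieDerivation.ad K L).idealRange) = ⊥ := by
  refine (LieSubmodule.eq_bot_iff _).mpr fun Dbar hDbar ↦ ?_
  obtain ⟨D, rfl⟩ := LieSubmodule.Quotient.surjective_mk' _ Dbar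
  have hD := LieDerivation.exists_ad_eq_lie_of_mk_mem_center hDbar
  obtain ⟨m, hm⟩ := hcomp.2 (Holomorph.extendDerivation D (LieDerivation.adPreimageLie hc D hD)
    (LieDerivation.lie_adPreimageLie hc D hD) (LieDerivation.adPreimageLie_lie hc D hD))
  rw [LieSubmodule.Quotient.mk_eq_zero, Holomorph.eq_ad_fst_of_extendDerivation_eq_ad hc hm]
  exact (LieDerivation.ad K L).mem_idealRange m.fst

/-- Let `g` be perfect with zero center. If the holomorph `h(g)` is complete, then
the outer derivation algebra `Der(g)/ad(g)` has zero center. -/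
theorem center_outer_eq_bot_of_holomorph_isComplete (K : Type*) (L : Type*) [Field K]
    [LieRing L] [LieAlgebra K L] (hperf : ⁅(⊤ : LieIdeal K L), (⊤ : LieIdeal K L)⁆ = ⊤)
    (hc : LieAlgebra.center K L = ⊥)
    (hcomp : IsCompleteLieAlgebra K (Holomorph K L)) :
    LieAlgebra.center K (LieDerivation K L L ⧸ (LieDerivation.ad K L).idealRange) = ⊥ :=
  center_outer_eq_bot_of_holomorph_isComplete_general K L hc hcomp
end

section
/- Let h(g) be the holomorph of a Lie algebra g with zero center, and let D be a derivation of h(g) vanishing on g. Then for every d ∈ Der(g), writing D(d) = x_d + d_1 with x_d ∈ g and d_1 ∈ Der(g), one has d_1 = −ad_{x_d}. -/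
theorem LieDerivation.lie_apply_eq_zero_of_apply_eq_zero {R L : Type*} [CommRing R] [LieRing L]
    [LieAlgebra R L] (D : LieDerivation R L L) {a b : L} (ha : D a = 0) (hba : D ⁅b, a⁆ = 0) :
    ⁅D b, a⁆ = 0 := by
  simpa [ha] using (D.apply_lie_eq_add b a).symm.trans hba

namespace Holomorph

variable {K L : Type*} [Field K] [LieRing L] [LieAlgebra K L]

lemma lie_mk_zero (h : Holomorph K L) (y : L) :
    ⁅h, mk y 0⁆ = (mk (⁅h.fst, y⁆ + h.snd y) 0 : Holomorph K L) := by
  calc ⁅h, mk y 0⁆ = ⁅mk h.fst h.snd, mk y 0⁆ := rfl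
    _ = mk (⁅h.fst, y⁆ + h.snd y) 0 := by simp [bracket_def]

lemma mk_zero_lie_mk_zero (d : LieDerivation K L L) (y : L) :
    ⁅mk 0 d, mk y 0⁆ = (mk (d y) 0 : Holomorph K L) := by
  simp [lie_mk_zero]

lemma snd_eq_neg_ad_of_forall_lie_mk_zero_eq_zero {h : Holomorph K L}
    (hh : ∀ y : L, ⁅h, (mk y 0 : Holomorph K L)⁆ = 0) : h.snd = -LieDerivation.ad K L h.fst := by
  ext y
  have := congrArg fst (hh y)
  rw [lie_mk_zero, fst_mk] at this
  simpa [LieDerivation.ad_apply_apply] using eq_neg_of_add_eq_zero_right this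

end Holomorph

theorem holomorph_derivation_snd_eq_neg_ad_general (K : Type*) (L : Type*) [Field K] [LieRing L]
    [LieAlgebra K L]
    (D : LieDerivation K (Holomorph K L) (Holomorph K L))
    (hD : ∀ x : L, D (Holomorph.mk x 0) = 0) (d : LieDerivation K L L) :
    (D (Holomorph.mk 0 d)).snd = - LieDerivation.ad K L ((D (Holomorph.mk 0 d)).fst) := by
  refine Holomorph.snd_eq_neg_ad_of_forall_lie_mk_zero_eq_zero fun y => ?_
  refine D.lie_apply_eq_zero_of_apply_eq_zero (hD y) ?_
  rw [Holomorph.mk_zero_lie_mk_zero, hD]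

/-- Let `g` have zero center and let `D` be a derivation of the holomorph `h(g)`
vanishing on `g`. Writing `D(d) = x_d + d₁` with `x_d ∈ g`, `d₁ ∈ Der(g)`, one has
`d₁ = -ad_{x_d}`. -/
theorem holomorph_derivation_snd_eq_neg_ad (K : Type*) (L : Type*) [Field K] [LieRing L]
    [LieAlgebra K L] (hc : LieAlgebra.center K L = ⊥)
    (D : LieDerivation K (Holomorph K L) (Holomorph K L))
    (hD : ∀ x : L, D (Holomorph.mk x 0) = 0) (d : LieDerivation K L L) :
    (D (Holomorph.mk 0 d)).snd = - LieDerivation.ad K L ((D (Holomorph.mk 0 d)).fst) :=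
  holomorph_derivation_snd_eq_neg_ad_general K L D hD d
end

section
/- Let g be a Lie algebra with zero center and suppose D ∈ Der(g) satisfies [D, Der(g)] ⊆ ad(g). Define x_d ∈ g by [D,d] = ad_{x_d} for each d ∈ Der(g). Then the map D' : h(g) → h(g) given by D'|_g = 0 and D'(d) = x_d − ad_{x_d} is a derivation of the holomorph h(g). -/
namespace Holomorph

variable {K L : Type*} [Field K] [LieRing L] [LieAlgebra K L]

lemma eta (h : Holomorph K L) : mk h.fst h.snd = h := rfl

lemma mk_sub_mk (x y : L) (d e : LieDerivation K L L) : mk x d - mk y e = mk (x - y) (d - e) :=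
  rfl

lemma mk_zero_zero : mk (0 : L) (0 : LieDerivation K L L) = 0 := rfl

def derivationOfCocycle (φ : LieDerivation K L L →ₗ[K] L)
    (hφ : ∀ d e, φ ⁅d, e⁆ = d (φ e) - e (φ d)) :
    LieDerivation K (Holomorph K L) (Holomorph K L) where
  toFun h := mk (φ h.snd) (-LieDerivation.ad K L (φ h.snd))
  map_add' h h' := by
    simp only [snd_add, map_add, neg_add]
    rfl
  map_smul' t h := by
    rw [snd_smul, map_smul, map_smul, ← smul_neg]
    rfl
  leibniz' h h' := by
    rw [← eta h, ← eta h']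
    generalize h.fst = x, h.snd = d, h'.fst = y, h'.snd = e
    simp only [LinearMap.coe_mk, AddHom.coe_mk, snd_mk, bracket_def, hφ, mk_sub_mk]
    refine ext ?_ ?_
    · simp only [fst_mk, LieDerivation.neg_apply, LieDerivation.ad_apply_apply,
        ← lie_skew (φ e) x, ← lie_skew (φ d) y]
      abel
    · simp only [snd_mk, map_sub, lie_neg, LieDerivation.lie_der_ad_eq_ad_der]
      abel

lemma derivationOfCocycle_apply (φ : LieDerivation K L L →ₗ[K] L)
    (hφ : ∀ d e, φ ⁅d, e⁆ = d (φ e) - e (φ d)) (x : L) (d : LieDerivation K L L) :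
    derivationOfCocycle φ hφ (mk x d) = mk (φ d) (-LieDerivation.ad K L (φ d)) := rfl

lemma derivationOfCocycle_apply_mk_zero (φ : LieDerivation K L L →ₗ[K] L)
    (hφ : ∀ d e, φ ⁅d, e⁆ = d (φ e) - e (φ d)) (x : L) :
    derivationOfCocycle φ hφ (mk x 0) = 0 := by
  rw [derivationOfCocycle_apply, map_zero, map_zero, neg_zero, mk_zero_zero]

end Holomorph

namespace LieDerivation

variable {K L : Type*} [Field K] [LieRing L] [LieAlgebra K L]
  (hinj : Function.Injective (ad K L)) {D : LieDerivation K L L}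
  {xd : LieDerivation K L L → L} (hxd : ∀ d, ⁅D, d⁆ = ad K L (xd d))

def adPreimageOfLie : LieDerivation K L L →ₗ[K] L where
  toFun := xd
  map_add' d e := hinj <| by rw [map_add, ← hxd, ← hxd, ← hxd, lie_add]
  map_smul' t d := hinj <| by rw [map_smul, ← hxd, ← hxd, lie_smul, RingHom.id_apply]

lemma adPreimageOfLie_apply (d : LieDerivation K L L) : adPreimageOfLie hinj hxd d = xd d := rfl

lemma adPreimageOfLie_lie (d e : LieDerivation K L L) :
    adPreimageOfLie hinj hxd ⁅d, e⁆ =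
      d (adPreimageOfLie hinj hxd e) - e (adPreimageOfLie hinj hxd d) :=
  hinj <| by
    simp only [adPreimageOfLie_apply]
    rw [← hxd, leibniz_lie, hxd, hxd, ← lie_skew, lie_der_ad_eq_ad_der, lie_der_ad_eq_ad_der,
      map_sub]
    abel

end LieDerivation

/-- Let `g` have zero center, and let `D ∈ Der(g)` satisfy `[D, Der(g)] ⊆ ad(g)`,
with `[D, d] = ad_{x_d}` for each `d`.  Then the map determined by vanishing on `g`
and sending `d` to `x_d - ad_{x_d}` is a derivation of the holomorph `h(g)`. -/
theorem holomorph_derivation_of_central_outer (K : Type*) (L : Type*) [Field K] [LieRing L]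
    [LieAlgebra K L] (hc : LieAlgebra.center K L = ⊥) (D : LieDerivation K L L)
    (xd : LieDerivation K L L → L)
    (hxd : ∀ d : LieDerivation K L L, ⁅D, d⁆ = LieDerivation.ad K L (xd d)) :
    ∃ D' : LieDerivation K (Holomorph K L) (Holomorph K L),
      (∀ x : L, D' (Holomorph.mk x 0) = 0) ∧
      ∀ (x : L) (d : LieDerivation K L L),
        D' (Holomorph.mk x d) = Holomorph.mk (xd d) (- LieDerivation.ad K L (xd d)) := by
  have hinj := LieDerivation.injective_ad_of_center_eq_bot hc
  have hcocycle := LieDerivation.adPreimageOfLie_lie hinj hxd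
  exact ⟨Holomorph.derivationOfCocycle _ hcocycle,
    Holomorph.derivationOfCocycle_apply_mk_zero _ hcocycle,
    Holomorph.derivationOfCocycle_apply _ hcocycle⟩
end

section
/- For the quantum torus F_q viewed as a Lie algebra under the commutator, F_q decomposes as a direct sum of Lie ideals F_q = C(F_q) ⊕ [F_q, F_q], where C(F_q) = ⊕_{a ∈ rad(f)} F t^a. -/
open Finset in
/-- The twisting scalar `σ(a,b) = ∏_{i>j} q_{ji}^{a_j b_i}` of a quantum torus. -/
noncomputable def quantumSigma {n : ℕ} {F : Type*} [Field F]
    (q : Matrix (Fin n) (Fin n) F) (a b : Fin n → ℤ) : F :=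
  ∏ i : Fin n, ∏ j ∈ Finset.univ.filter (fun j => j < i), q j i ^ (a j * b i)

attribute [local instance] LieRing.ofAssociativeRing

/-!
In the basis `t^a` the bracket is `⁅t^a, t^b⁆ = (σ(a,b) - σ(b,a)) t^{a+b}`, so the
coefficient of `⁅t^b, x⁆` at `a + b` is `(σ(b,a) - σ(a,b))` times that of `x` at `a`;
hence `x` is central iff it is supported on `rad(f)`. As `σ` is bimultiplicative with
`σ(d,d) ≠ 0`, `σ(c+d,d) = σ(d,c+d)` iff `σ(c,d) = σ(d,c)`. So every bracket of monomials is
supported off `rad(f)`, and for `a ∉ rad(f)`, with `σ(a,b) ≠ σ(b,a)`, `t^a` is a nonzero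
multiple of `⁅t^b, t^{a-b}⁆`. Thus `C(F_q)` and `[F_q, F_q]` are spanned by the monomials
indexed by `rad(f)` and by its complement.
-/

open Module Finset

namespace LieAlgebra

variable {ι R L : Type*} [CommRing R] [LieRing L] [LieAlgebra R L]

lemma mem_center_iff_of_basis (b : Module.Basis ι R L) {x : L} :
    x ∈ center R L ↔ ∀ i, ⁅b i, x⁆ = 0 := by
  rw [LieModule.mem_maxTrivSubmodule]
  refine ⟨fun h i => h (b i), fun h y => ?_⟩
  have hx : (LieModule.toEnd R L L : L →ₗ[R] Module.End R L).flip x = 0 :=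
    b.ext fun i => by simpa using h i
  simpa using LinearMap.congr_fun hx y

lemma lie_top_top_le_of_basis (b : Module.Basis ι R L) {D : Submodule R L}
    (h : ∀ i j, ⁅b i, b j⁆ ∈ D) :
    LieSubmodule.toSubmodule ⁅(⊤ : LieIdeal R L), (⊤ : LieIdeal R L)⁆ ≤ D := by
  have hB : (LieModule.toEnd R L L : L →ₗ[R] L →ₗ[R] L).compr₂ D.mkQ = 0 :=
    LinearMap.ext_basis b b fun i j => by
      simpa [Submodule.Quotient.mk_eq_zero] using h i j
  rw [LieSubmodule.lieIdeal_oper_eq_linear_span, Submodule.span_le]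
  rintro _ ⟨⟨x, -⟩, ⟨y, -⟩, rfl⟩
  simpa [Submodule.Quotient.mk_eq_zero] using LinearMap.congr_fun₂ hB x y

end LieAlgebra

namespace TwistedGroupAlgebra

variable {Γ F A : Type*} [Field F] [Ring A] [Algebra F A]

/-- `rad(f)`, with `f(a,b) = 1` written as `σ(a,b) = σ(b,a)`. -/
def radical (σ : Γ → Γ → F) : Set Γ := {a | ∀ b, σ a b = σ b a}

structure IsBimultiplicative [Add Γ] (σ : Γ → Γ → F) : Prop where
  add_left : ∀ a a' b, σ (a + a') b = σ a b * σ a' b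
  add_right : ∀ a b b', σ a (b + b') = σ a b * σ a b'

lemma IsBimultiplicative.comm_add_left_iff [Add Γ] {σ : Γ → Γ → F}
    (hσ : IsBimultiplicative σ) {c d : Γ} (hd : σ d d ≠ 0) :
    σ (c + d) d = σ d (c + d) ↔ σ c d = σ d c := by
  rw [hσ.add_left, hσ.add_right, mul_left_inj' hd]

section CommMonoid

variable [AddCommMonoid Γ] {t : Basis Γ F A} {σ : Γ → Γ → F}

lemma lie_basis (hmul : ∀ a b, t a * t b = σ a b • t (a + b)) (a b : Γ) :
    ⁅t a, t b⁆ = (σ a b - σ b a) • t (a + b) := by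
  rw [Ring.lie_def, hmul, hmul, add_comm b a, sub_smul]

lemma basis_mem_center (hmul : ∀ a b, t a * t b = σ a b • t (a + b)) {a : Γ}
    (ha : a ∈ radical σ) : t a ∈ LieAlgebra.center F A :=
  (LieAlgebra.mem_center_iff_of_basis t).2 fun b => by
    rw [lie_basis hmul, ha b, sub_self, zero_smul]

end CommMonoid

section CancelCommMonoid

variable [AddCancelCommMonoid Γ] {t : Basis Γ F A} {σ : Γ → Γ → F}

lemma repr_lie_basis_add (hmul : ∀ a b, t a * t b = σ a b • t (a + b)) (x : A) (a b : Γ) :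
    t.repr ⁅t b, x⁆ (b + a) = (σ b a - σ a b) * t.repr x a := by
  have hcoord :
      t.coord (b + a) ∘ₗ LieModule.toEnd F A A (t b) = (σ b a - σ a b) • t.coord a :=
    t.ext fun c => by by_cases hc : c = a <;> simp [hc, lie_basis hmul]
  simpa using LinearMap.congr_fun hcoord x

lemma mem_radical_of_mem_center (hmul : ∀ a b, t a * t b = σ a b • t (a + b)) {x : A}
    (hx : x ∈ LieAlgebra.center F A) {a : Γ} (ha : a ∈ (t.repr x).support) :
    a ∈ radical σ := by
  intro b
  have hcoeff := repr_lie_basis_add hmul x a b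
  rw [(LieAlgebra.mem_center_iff_of_basis t).1 hx b, map_zero, Finsupp.zero_apply, eq_comm,
    mul_eq_zero, sub_eq_zero] at hcoeff
  exact (hcoeff.resolve_right (Finsupp.mem_support_iff.1 ha)).symm

theorem center_eq_span_radical (hmul : ∀ a b, t a * t b = σ a b • t (a + b)) :
    LieSubmodule.toSubmodule (LieAlgebra.center F A) = Submodule.span F (t '' radical σ) := by
  refine le_antisymm (fun x hx => t.mem_span_image.2 fun a ha =>
    mem_radical_of_mem_center hmul hx ha) ?_
  rw [Submodule.span_le]
  rintro _ ⟨a, ha, rfl⟩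
  exact basis_mem_center hmul ha

end CancelCommMonoid

section Group

variable [AddCommGroup Γ] {t : Basis Γ F A} {σ : Γ → Γ → F}

lemma lie_basis_mem_span_compl_radical (hmul : ∀ a b, t a * t b = σ a b • t (a + b))
    (hσ : IsBimultiplicative σ) (hσ0 : ∀ a, σ a a ≠ 0) (c d : Γ) :
    ⁅t c, t d⁆ ∈ Submodule.span F (t '' (radical σ)ᶜ) := by
  rw [lie_basis hmul]
  by_cases hcd : σ c d = σ d c
  · rw [hcd, sub_self, zero_smul]
    exact Submodule.zero_mem _
  · refine Submodule.smul_mem _ _ (Submodule.subset_span ⟨c + d, fun hrad => hcd ?_, rfl⟩)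
    exact (hσ.comm_add_left_iff (hσ0 d)).1 (hrad d)

lemma basis_mem_lie_top_top (hmul : ∀ a b, t a * t b = σ a b • t (a + b))
    (hσ : IsBimultiplicative σ) (hσ0 : ∀ a, σ a a ≠ 0) {a : Γ} (ha : a ∉ radical σ) :
    t a ∈ ⁅(⊤ : LieIdeal F A), (⊤ : LieIdeal F A)⁆ := by
  obtain ⟨b, hb⟩ : ∃ b, σ a b ≠ σ b a := by simpa [radical] using ha
  have hne : σ b (a - b) - σ (a - b) b ≠ 0 := by
    rw [sub_ne_zero, ne_comm, Ne, ← hσ.comm_add_left_iff (hσ0 b), sub_add_cancel]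
    exact hb
  have hta : t a = (σ b (a - b) - σ (a - b) b)⁻¹ • ⁅t b, t (a - b)⁆ := by
    rw [lie_basis hmul, add_sub_cancel, smul_smul, inv_mul_cancel₀ hne, one_smul]
  rw [hta]
  exact SMulMemClass.smul_mem _ (LieSubmodule.lie_mem_lie (LieSubmodule.mem_top _)
    (LieSubmodule.mem_top _))

theorem lie_top_top_eq_span_compl_radical (hmul : ∀ a b, t a * t b = σ a b • t (a + b))
    (hσ : IsBimultiplicative σ) (hσ0 : ∀ a, σ a a ≠ 0) :
    LieSubmodule.toSubmodule ⁅(⊤ : LieIdeal F A), (⊤ : LieIdeal F A)⁆ =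
      Submodule.span F (t '' (radical σ)ᶜ) := by
  refine le_antisymm (LieAlgebra.lie_top_top_le_of_basis t
    (lie_basis_mem_span_compl_radical hmul hσ hσ0)) ?_
  rw [Submodule.span_le]
  rintro _ ⟨a, ha, rfl⟩
  exact basis_mem_lie_top_top hmul hσ hσ0 ha

theorem isCompl_center_lie_top_top (hmul : ∀ a b, t a * t b = σ a b • t (a + b))
    (hσ : IsBimultiplicative σ) (hσ0 : ∀ a, σ a a ≠ 0) :
    IsCompl (LieAlgebra.center F A) ⁅(⊤ : LieIdeal F A), (⊤ : LieIdeal F A)⁆ := by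
  rw [← LieSubmodule.isCompl_toSubmodule, center_eq_span_radical hmul,
    lie_top_top_eq_span_compl_radical hmul hσ hσ0]
  exact t.linearIndependent.isCompl_span_image t.span_eq isCompl_compl

end Group

end TwistedGroupAlgebra

section QuantumSigma

variable {n : ℕ} {F : Type*} [Field F] {q : Matrix (Fin n) (Fin n) F}

lemma quantumSigma_ne_zero (hq0 : ∀ i j, q i j ≠ 0) (a b : Fin n → ℤ) :
    quantumSigma q a b ≠ 0 :=
  prod_ne_zero_iff.2 fun i _ => prod_ne_zero_iff.2 fun j _ => zpow_ne_zero _ (hq0 j i)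

lemma isBimultiplicative_quantumSigma (hq0 : ∀ i j, q i j ≠ 0) :
    TwistedGroupAlgebra.IsBimultiplicative (quantumSigma q) where
  add_left a a' b := by
    simp only [quantumSigma, ← prod_mul_distrib, Pi.add_apply, add_mul, zpow_add₀ (hq0 _ _)]
  add_right a b b' := by
    simp only [quantumSigma, ← prod_mul_distrib, Pi.add_apply, mul_add, zpow_add₀ (hq0 _ _)]

end QuantumSigma

open TwistedGroupAlgebra in
theorem quantumTorus_center_isCompl_derived_general {n : ℕ} (F : Type*) [Field F]
    (q : Matrix (Fin n) (Fin n) F) (hq0 : ∀ i j, q i j ≠ 0)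
    (A : Type*) [Ring A] [Algebra F A] (t : Module.Basis ((Fin n) → ℤ) F A)
    (hmul : ∀ a b : Fin n → ℤ, t a * t b = quantumSigma q a b • t (a + b)) :
    (LieSubmodule.toSubmodule (LieAlgebra.center F A) =
      Submodule.span F (t '' {a : Fin n → ℤ |
        ∀ b : Fin n → ℤ, quantumSigma q a b * (quantumSigma q b a)⁻¹ = 1})) ∧
    IsCompl (LieAlgebra.center F A) ⁅(⊤ : LieIdeal F A), (⊤ : LieIdeal F A)⁆ := by
  have hrad : {a : Fin n → ℤ | ∀ b, quantumSigma q a b * (quantumSigma q b a)⁻¹ = 1} =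
      radical (quantumSigma q) :=
    Set.ext fun a => forall_congr' fun b => mul_inv_eq_one₀ (quantumSigma_ne_zero hq0 b a)
  rw [hrad]
  exact ⟨center_eq_span_radical hmul, isCompl_center_lie_top_top hmul
    (isBimultiplicative_quantumSigma hq0) fun a => quantumSigma_ne_zero hq0 a a⟩

/-- The quantum torus, viewed as a Lie algebra under the commutator, decomposes as the
direct sum of Lie ideals `F_q = C(F_q) ⊕ [F_q, F_q]`, where the center `C(F_q)` is
spanned by the monomials `t^a` with `a ∈ rad(f)`, `f(a,b) = σ(a,b)σ(b,a)⁻¹`. -/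
theorem quantumTorus_center_isCompl_derived {n : ℕ} (F : Type*) [Field F] [CharZero F]
    (q : Matrix (Fin n) (Fin n) F) (hq0 : ∀ i j, q i j ≠ 0) (hq1 : ∀ i, q i i = 1)
    (hq2 : ∀ i j, q j i = (q i j)⁻¹)
    (A : Type*) [Ring A] [Algebra F A] (t : Module.Basis ((Fin n) → ℤ) F A)
    (hmul : ∀ a b : Fin n → ℤ, t a * t b = quantumSigma q a b • t (a + b)) :
    (LieSubmodule.toSubmodule (LieAlgebra.center F A) =
      Submodule.span F (t '' {a : Fin n → ℤ |
        ∀ b : Fin n → ℤ, quantumSigma q a b * (quantumSigma q b a)⁻¹ = 1})) ∧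
    IsCompl (LieAlgebra.center F A) ⁅(⊤ : LieIdeal F A), (⊤ : LieIdeal F A)⁆ :=
  quantumTorus_center_isCompl_derived_general F q hq0 A t hmul
end
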